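/- There exists a constant c > 0 such that for every L ≥ 1, every α ∈ (0,1], every 0 ≤ k ≤ L−1 and every t ≥ 0, the birth-and-death chain with parameters L and α satisfies P(X_{t'} ≤ k for all 0 ≤ t' ≤ t | X_0 = 0) = P(X_{t'} ≥ L−k for all 0 ≤ t' ≤ t | X_0 = L), and |P(X_{t'} ≤ k for all 0 ≤ t' ≤ t | X_0 = 0) − (1 − α/(k+1))^t| ≤ c·k·α. -/

import Mathlib

open MeasureTheory Filter Topology

/-- Transition probabilities of the birth-and-death chain on `{0,…,L}` with parameter `α`:
`P(0,1) = P(L,L−1) = α`, `P(0,0) = P(L,L) = 1−α`, and `P(i,i+1) = P(i,i−1) = 1/2` for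
`0 < i < L`. -/
noncomputable def bdKernel (L : ℕ) (α : ℝ) (i j : ℕ) : ℝ :=
  if i = 0 then (if j = 1 then α else if j = 0 then 1 - α else 0)
  else if i = L then (if j = L - 1 then α else if j = L then 1 - α else 0)
  else if i < L then (if j = i + 1 ∨ j = i - 1 then 1 / 2 else 0)
  else 0

/-- `bdDist L α x t j = P^t(x, j)`, the probability that the birth-and-death chain started at
`x` is at state `j` at time `t`. -/
noncomputable def bdDist (L : ℕ) (α : ℝ) (x : ℕ) : ℕ → ℕ → ℝ
  | 0 => fun j => if j = x then 1 else 0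
  | t + 1 => fun j => ∑ i ∈ Finset.range (L + 1), bdDist L α x t i * bdKernel L α i j

/-- Total variation distance between two distributions on the state space `{0,…,L}`. -/
noncomputable def bdTV (L : ℕ) (μ ν : ℕ → ℝ) : ℝ :=
  ⨆ A : Set ℕ,
    |∑ i ∈ Finset.range (L + 1), Set.indicator A μ i -
      ∑ i ∈ Finset.range (L + 1), Set.indicator A ν i|

open Classical in
/-- `bdStay L α T x A = P(X_t ∈ A_t for all 0 ≤ t ≤ T | X_0 = x)` for the birth-and-death
chain with parameters `L` and `α`. -/
noncomputable def bdStay (L : ℕ) (α : ℝ) (T : ℕ) (x : ℕ) (A : ℕ → Set ℕ) : ℝ :=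
  ∑ p : Fin (T + 1) → Fin (L + 1),
    if (p 0 : ℕ) = x ∧ ∀ t : Fin (T + 1), (p t : ℕ) ∈ A (t : ℕ) then
      ∏ i : Fin T, bdKernel L α (p i.castSucc) (p i.succ) else 0

/-- The separation `S^A_T(0,L)` of a separating sequence `A` for the birth-and-death chain. -/
noncomputable def bdSep (L : ℕ) (α : ℝ) (T : ℕ) (A : ℕ → Set ℕ) : ℝ :=
  bdStay L α T 0 A + bdStay L α T L (fun t => (A t)ᶜ)

/-!
The reflection `i ↦ L - i` maps the chain to itself, which gives the identity. For the estimate,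
the probability of staying in `{0, …, k}` is `(Q ^ t 1) 0`, where `Q` is the chain killed on
leaving `{0, …, k}`: it loses mass `1/2` at `k` and is the half-line chain elsewhere. With
`λ = 1 - α / (k + 1)`, the solution `h` of `h 0 = 1`, `h 1 = 1 - 1 / (k + 1)`,
`h (x + 2) = 2 λ h (x + 1) - h x` satisfies `Q h = λ h` away from `k`, and while `kα` is small
`h` stays within `O(kα)` of the harmonic profile `1 - x / (k + 1)`, so its defect at `k` is
`O(kα)` times the killing rate there. The accumulated defects are therefore paid for by killed
mass, giving `|Q ^ t h - λ ^ t h| = O(kα)`. Finally `(Q ^ t (1 - h)) 0 = O(kα)`: `1 - h` vanishes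
at `0` and is bounded, while by reversibility (weights `1, 2α, 2α, …`) the killed chain started
at `0` sits at any other state with probability at most `2α`.
-/

open Matrix

namespace Matrix

variable {n : Type*} [Fintype n] {Q : Matrix n n ℝ}

theorem mulVec_le_mulVec_of_nonneg (hQ : ∀ i j, 0 ≤ Q i j) {v w : n → ℝ} (hvw : v ≤ w) :
    Q *ᵥ v ≤ Q *ᵥ w := fun i =>
  Finset.sum_le_sum fun j _ => mul_le_mul_of_nonneg_left (hvw j) (hQ i j)

variable [DecidableEq n]

theorem pow_mulVec_one_le_one (hQ : ∀ i j, 0 ≤ Q i j) (hQ1 : Q *ᵥ 1 ≤ 1) (t : ℕ) :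
    Q ^ t *ᵥ 1 ≤ 1 := by
  induction t with
  | zero => rw [pow_zero, one_mulVec]
  | succ t ih =>
    rw [pow_succ, ← mulVec_mulVec]
    exact (mulVec_le_mulVec_of_nonneg (pow_apply_nonneg hQ t) hQ1).trans ih

theorem pow_mulVec_one_nonneg (hQ : ∀ i j, 0 ≤ Q i j) (t : ℕ) (i : n) :
    0 ≤ (Q ^ t *ᵥ 1) i :=
  Finset.sum_nonneg fun j _ => by simpa using pow_apply_nonneg hQ t i j

theorem pow_detailed_balance {π : n → ℝ} (hQ : ∀ i j, π i * Q i j = π j * Q j i) (t : ℕ)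
    (i j : n) : π i * (Q ^ t) i j = π j * (Q ^ t) j i := by
  have hD : diagonal π * Q = Qᵀ * diagonal π := by
    ext i j; simp [diagonal_mul, mul_diagonal, hQ i j, mul_comm]
  have key : diagonal π * Q ^ t = (Q ^ t)ᵀ * diagonal π := by
    induction t with
    | zero => simp
    | succ t ih =>
      rw [pow_succ, ← mul_assoc, ih, mul_assoc, hD, ← mul_assoc, ← transpose_mul, ← pow_succ',
        pow_succ]
  have hij := congrFun (congrFun key i) j
  rwa [diagonal_mul, mul_diagonal, transpose_apply, mul_comm _ (π j)] at hij

theorem abs_pow_mulVec_sub_pow_mul_le (hQ : ∀ i j, 0 ≤ Q i j) {h : n → ℝ} {r c : ℝ}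
    (hr : |r| ≤ 1) (hdef : ∀ i, |(Q *ᵥ h) i - r * h i| ≤ c * (1 - (Q *ᵥ 1) i))
    (t : ℕ) (i : n) :
    |(Q ^ t *ᵥ h) i - r ^ t * h i| ≤ c * (1 - (Q ^ t *ᵥ 1) i) := by
  induction t generalizing i with
  | zero => simp
  | succ t ih =>
    have hsplit : (Q ^ (t + 1) *ᵥ h) i - r ^ (t + 1) * h i
        = (Q *ᵥ (Q ^ t *ᵥ h - r ^ t • h)) i + r ^ t * ((Q *ᵥ h) i - r * h i) := by
      simp only [pow_succ', ← mulVec_mulVec, mulVec_sub, mulVec_smul, Pi.sub_apply,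
        Pi.smul_apply, smul_eq_mul]
      ring
    have hprop : |(Q *ᵥ (Q ^ t *ᵥ h - r ^ t • h)) i| ≤ (Q *ᵥ c • (1 - Q ^ t *ᵥ 1)) i :=
      (Finset.abs_sum_le_sum_abs _ _).trans <| Finset.sum_le_sum fun j _ => by
        rw [abs_mul, abs_of_nonneg (hQ i j)]
        exact mul_le_mul_of_nonneg_left (by simpa using ih j) (hQ i j)
    have hdecay : |r ^ t * ((Q *ᵥ h) i - r * h i)| ≤ c * (1 - (Q *ᵥ 1) i) := by
      rw [abs_mul, abs_pow]
      exact (mul_le_of_le_one_left (abs_nonneg _) (pow_le_one₀ (abs_nonneg r) hr)).trans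
        (hdef i)
    have hsum : (Q *ᵥ c • (1 - Q ^ t *ᵥ 1)) i + c * (1 - (Q *ᵥ 1) i)
        = c * (1 - (Q ^ (t + 1) *ᵥ 1) i) := by
      simp only [pow_succ', ← mulVec_mulVec, mulVec_smul, mulVec_sub, Pi.smul_apply,
        Pi.sub_apply, smul_eq_mul]
      ring
    rw [hsplit, ← hsum]
    exact (abs_add_le _ _).trans (add_le_add hprop hdecay)

end Matrix

section PathSums

variable {L : ℕ} {α : ℝ}

theorem bdStay_zero_of_mem {x : ℕ} (hx : x ≤ L) {A : ℕ → Set ℕ} (hxA : x ∈ A 0) :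
    bdStay L α 0 x A = 1 := by
  unfold bdStay
  rw [← (Equiv.funUnique (Fin 1) (Fin (L + 1))).symm.sum_comp,
    Finset.sum_eq_single ⟨x, by omega⟩]
  · simp [hxA]
  · intro b _ hb
    have : (b : ℕ) ≠ x := fun h => hb (Fin.ext h)
    simp [this]
  · simp

theorem bdStay_eq_zero_of_notMem {T x : ℕ} {A : ℕ → Set ℕ} (hx : x ∉ A 0) :
    bdStay L α T x A = 0 := by
  refine Finset.sum_eq_zero fun p _ => if_neg ?_
  rintro ⟨rfl, hp⟩
  exact hx (by simpa using hp 0)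

theorem bdStay_succ {T x : ℕ} (hx : x ≤ L) {A : ℕ → Set ℕ} (hxA : x ∈ A 0) :
    bdStay L α (T + 1) x A =
      ∑ y ∈ Finset.range (L + 1), bdKernel L α x y * bdStay L α T y (fun t => A (t + 1)) := by
  classical
  unfold bdStay
  rw [← (Fin.consEquiv fun _ => Fin (L + 1)).sum_comp, Fintype.sum_prod_type,
    Finset.sum_eq_single (⟨x, by omega⟩ : Fin (L + 1)), ← Fin.sum_univ_eq_sum_range]
  · simp only [Finset.mul_sum]
    rw [Finset.sum_comm]
    refine Finset.sum_congr rfl fun q _ => ?_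
    rw [Finset.sum_eq_single (q 0)]
    · simp [Fin.consEquiv, Fin.forall_fin_succ, Fin.prod_univ_succ, hxA]
    · intro y _ hy
      simp [Fin.val_eq_val, Ne.symm hy]
    · simp
  · intro y _ hy
    refine Finset.sum_eq_zero fun q _ => if_neg ?_
    rintro ⟨h, -⟩
    exact hy (Fin.ext (by simpa [Fin.consEquiv] using h))
  · simp

theorem bdKernel_reflect {a b : ℕ} (ha : a ≤ L) (hb : b ≤ L) :
    bdKernel L α (L - a) (L - b) = bdKernel L α a b := by
  unfold bdKernel
  split_ifs <;> first | rfl | omega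

theorem bdStay_reflect {T x : ℕ} (hx : x ≤ L) (A : ℕ → Set ℕ) :
    bdStay L α T (L - x) (fun t => {i | L - i ∈ A t}) = bdStay L α T x A := by
  classical
  refine Fintype.sum_equiv ((Equiv.refl _).arrowCongr Fin.revPerm) _ _ fun p => ?_
  have hrev : ∀ t, (((Equiv.refl _).arrowCongr Fin.revPerm p) t : ℕ) = L - p t := fun t => by
    simp [Fin.val_rev]
  have hp : ∀ t, (p t : ℕ) ≤ L := fun t => (p t).is_le
  have hstart : (p 0 : ℕ) = L - x ↔ L - p 0 = x := by have := hp 0; omega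
  simp only [hrev, Set.mem_ofPred_eq]
  rw [Finset.prod_congr rfl fun i _ => (bdKernel_reflect (hp _) (hp _)).symm]
  exact if_congr (and_congr hstart Iff.rfl) rfl rfl

end PathSums

/-- `bdKernel` with `L = ∞`. -/
noncomputable def halfLineKernel (α : ℝ) (x y : ℕ) : ℝ :=
  if x = 0 then (if y = 1 then α else if y = 0 then 1 - α else 0)
  else if y = x + 1 ∨ y = x - 1 then 1 / 2 else 0

noncomputable def halfLineWeight (α : ℝ) (x : ℕ) : ℝ := if x = 0 then 1 else 2 * α

section HalfLine

variable {α : ℝ}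

theorem bdKernel_eq_halfLineKernel {L x : ℕ} (hx : x < L) (y : ℕ) :
    bdKernel L α x y = halfLineKernel α x y := by
  unfold bdKernel halfLineKernel
  split_ifs <;> first | rfl | omega

theorem halfLineKernel_nonneg (hα0 : 0 ≤ α) (hα1 : α ≤ 1) (x y : ℕ) :
    0 ≤ halfLineKernel α x y := by
  unfold halfLineKernel
  split_ifs <;> linarith

theorem halfLineKernel_detailed_balance (x y : ℕ) :
    halfLineWeight α x * halfLineKernel α x y = halfLineWeight α y * halfLineKernel α y x := by
  unfold halfLineWeight halfLineKernel
  split_ifs <;> first | (exfalso; omega) | ring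

variable {k : ℕ} (f : ℕ → ℝ)

theorem sum_halfLineKernel_mul_zero (hk : 1 ≤ k) :
    ∑ y ∈ Finset.range (k + 1), halfLineKernel α 0 y * f y = (1 - α) * f 0 + α * f 1 := by
  rw [Finset.sum_eq_add_of_mem 0 1 (by simp) (Finset.mem_range.2 (by omega)) zero_ne_one]
  · simp [halfLineKernel]
  · rintro y - ⟨h0, h1⟩
    simp [halfLineKernel, h0, h1]

theorem sum_halfLineKernel_mul_of_lt {x : ℕ} (hx0 : 0 < x) (hxk : x < k) :
    ∑ y ∈ Finset.range (k + 1), halfLineKernel α x y * f y = (f (x - 1) + f (x + 1)) / 2 := by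
  rw [Finset.sum_eq_add_of_mem (x - 1) (x + 1) (Finset.mem_range.2 (by omega))
    (Finset.mem_range.2 (by omega)) (by omega)]
  · simp [halfLineKernel, hx0.ne']
    ring
  · rintro y - ⟨h1, h2⟩
    simp [halfLineKernel, hx0.ne', h1, h2]

theorem sum_halfLineKernel_mul_self (hk : 1 ≤ k) :
    ∑ y ∈ Finset.range (k + 1), halfLineKernel α k y * f y = f (k - 1) / 2 := by
  rw [Finset.sum_eq_single_of_mem (k - 1) (Finset.mem_range.2 (by omega))]
  · simp [halfLineKernel, show k ≠ 0 by omega]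
    ring
  · intro y hy hyk
    simp only [Finset.mem_range] at hy
    simp [halfLineKernel, show k ≠ 0 by omega, hyk, show y ≠ k + 1 by omega]

end HalfLine

/-- The birth-and-death chain killed on leaving `{0, …, k}`; it is the same for every `L > k`. -/
noncomputable def killedMatrix (k : ℕ) (α : ℝ) : Matrix (Fin (k + 1)) (Fin (k + 1)) ℝ :=
  Matrix.of fun i j => halfLineKernel α i j

section Killed

variable {k : ℕ} {α : ℝ}

theorem killedMatrix_mulVec (f : ℕ → ℝ) (i : Fin (k + 1)) :
    (killedMatrix k α *ᵥ fun j => f j) i =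
      ∑ y ∈ Finset.range (k + 1), halfLineKernel α i y * f y :=
  Fin.sum_univ_eq_sum_range (fun y => halfLineKernel α i y * f y) (k + 1)

theorem killedMatrix_nonneg (hα0 : 0 ≤ α) (hα1 : α ≤ 1) (i j : Fin (k + 1)) :
    0 ≤ killedMatrix k α i j :=
  halfLineKernel_nonneg hα0 hα1 i j

theorem killedMatrix_mulVec_one (hk : 1 ≤ k) (i : Fin (k + 1)) :
    (killedMatrix k α *ᵥ 1) i = if (i : ℕ) = k then 1 / 2 else 1 := by
  have hrow := killedMatrix_mulVec (k := k) (α := α) (fun _ => 1) i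
  simp only [mul_one] at hrow
  rw [show (1 : Fin (k + 1) → ℝ) = fun _ => 1 from rfl, hrow]
  obtain ⟨x, hx⟩ := i
  simp only
  rcases Nat.eq_zero_or_pos x with rfl | hx0
  · simpa [show 0 ≠ k by omega] using sum_halfLineKernel_mul_zero (α := α) (fun _ => 1) hk
  · rcases (Nat.lt_succ_iff.1 hx).lt_or_eq with hxk | rfl
    · simpa [hxk.ne] using sum_halfLineKernel_mul_of_lt (α := α) (fun _ => 1) hx0 hxk
    · simpa using sum_halfLineKernel_mul_self (α := α) (fun _ => 1) hk

theorem killedMatrix_mulVec_one_le (hk : 1 ≤ k) : killedMatrix k α *ᵥ 1 ≤ 1 := fun i => by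
  rw [killedMatrix_mulVec_one hk]
  split_ifs <;> norm_num

theorem killedMatrix_pow_zero_apply_le (hk : 1 ≤ k) (hα0 : 0 ≤ α) (hα1 : α ≤ 1) (t : ℕ)
    {j : Fin (k + 1)} (hj : j ≠ 0) : (killedMatrix k α ^ t) 0 j ≤ 2 * α := by
  have hQ := killedMatrix_nonneg (k := k) hα0 hα1
  have hj' : (j : ℕ) ≠ 0 := fun h => hj (Fin.ext h)
  have hbal : (killedMatrix k α ^ t) 0 j = 2 * α * (killedMatrix k α ^ t) j 0 := by
    simpa [halfLineWeight, hj'] using Matrix.pow_detailed_balance (Q := killedMatrix k α)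
      (π := fun i => halfLineWeight α i) (fun i j => halfLineKernel_detailed_balance i j) t 0 j
  have hret : (killedMatrix k α ^ t) j 0 ≤ 1 :=
    calc (killedMatrix k α ^ t) j 0 ≤ (killedMatrix k α ^ t *ᵥ 1) j :=
          by simpa [Matrix.mulVec, dotProduct] using
            Finset.single_le_sum (fun l _ => Matrix.pow_apply_nonneg hQ t j l) (Finset.mem_univ 0)
      _ ≤ 1 := Matrix.pow_mulVec_one_le_one hQ (killedMatrix_mulVec_one_le hk) t j
  rw [hbal]
  exact mul_le_of_le_one_right (by positivity) hret

theorem killedMatrix_zero_pow_mulVec_one (t : ℕ) :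
    (killedMatrix 0 α ^ t *ᵥ 1) 0 = (1 - α) ^ t := by
  induction t with
  | zero => simp
  | succ t ih =>
    rw [pow_succ', ← mulVec_mulVec]
    simp [mulVec, dotProduct, ← ih, killedMatrix, halfLineKernel, pow_succ']

end Killed

noncomputable def quasiEigenfunction (k : ℕ) (α : ℝ) : ℕ → ℝ
  | 0 => 1
  | 1 => 1 - 1 / (k + 1)
  | n + 2 => 2 * (1 - α / (k + 1)) * quasiEigenfunction k α (n + 1) - quasiEigenfunction k α n

section QuasiEigenfunction

variable {k : ℕ} {α : ℝ}

local notation "h" => quasiEigenfunction k α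

theorem killedMatrix_mulVec_quasiEigenfunction (hk : 1 ≤ k) (i : Fin (k + 1)) :
    (killedMatrix k α *ᵥ fun j => h j) i - (1 - α / (k + 1)) * h i =
      if (i : ℕ) = k then -h (k + 1) / 2 else 0 := by
  rw [killedMatrix_mulVec]
  obtain ⟨x, hx⟩ := i
  simp only
  rcases Nat.eq_zero_or_pos x with rfl | hx0
  · rw [sum_halfLineKernel_mul_zero _ hk, if_neg (by omega)]
    simp only [quasiEigenfunction]
    field_simp
    ring
  · obtain ⟨m, rfl⟩ : ∃ m, x = m + 1 := ⟨x - 1, by omega⟩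
    rcases (Nat.lt_succ_iff.1 hx).lt_or_eq with hxk | hxk
    · rw [sum_halfLineKernel_mul_of_lt _ hx0 hxk, if_neg hxk.ne, Nat.add_sub_cancel,
        quasiEigenfunction]
      ring
    · subst hxk
      rw [sum_halfLineKernel_mul_self _ hk, if_pos rfl, Nat.add_sub_cancel, quasiEigenfunction]
      ring

theorem quasiEigenfunction_near_linear (hα0 : 0 ≤ α) (hsmall : 2 * α * (k + 1) ≤ 1) {x : ℕ}
    (hx : x ≤ k + 1) :
    |h x - (1 - x / (k + 1))| ≤ 2 * α * x ^ 2 / (k + 1) ∧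
      |h (x + 1) - h x + 1 / (k + 1)| ≤ 4 * α * x / (k + 1) := by
  have hK : (0 : ℝ) < k + 1 := by positivity
  -- The second difference of `h` is `-(2α / (k + 1)) h`, which stays small while `|h| ≤ 2`.
  induction x with
  | zero => simp [quasiEigenfunction]
  | succ x ih =>
    obtain ⟨hu, hd⟩ := ih (by omega)
    have hxK : (x : ℝ) + 1 ≤ k + 1 := by exact_mod_cast hx
    have hu' :
        |h (x + 1) - (1 - (x + 1 : ℕ) / (k + 1))| ≤ 2 * α * (x + 1 : ℕ) ^ 2 / (k + 1) := by
      calc |h (x + 1) - (1 - (x + 1 : ℕ) / (k + 1))|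
          = |(h x - (1 - x / (k + 1))) + (h (x + 1) - h x + 1 / (k + 1))| := by
            push_cast; ring_nf
        _ ≤ 2 * α * x ^ 2 / (k + 1) + 4 * α * x / (k + 1) :=
            (abs_add_le _ _).trans (add_le_add hu hd)
        _ ≤ 2 * α * (x + 1 : ℕ) ^ 2 / (k + 1) := by
            rw [← add_div]; push_cast; gcongr; nlinarith
    have hbound : |h (x + 1)| ≤ 2 := by
      have hlin : |1 - ((x + 1 : ℕ) : ℝ) / (k + 1)| ≤ 1 := by
        have hq0 : 0 ≤ ((x : ℝ) + 1) / (k + 1) := by positivity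
        have hq1 : ((x : ℝ) + 1) / (k + 1) ≤ 1 := div_le_one_of_le₀ hxK hK.le
        rw [abs_le]; push_cast
        constructor <;> linarith
      have hsmallx : 2 * α * (x + 1 : ℕ) ^ 2 / (k + 1) ≤ 1 := by
        rw [div_le_one hK]; push_cast; nlinarith
      linarith [abs_sub_abs_le_abs_sub (h (x + 1)) (1 - ((x + 1 : ℕ) : ℝ) / (k + 1)),
        hu'.trans hsmallx]
    refine ⟨hu', ?_⟩
    calc |h (x + 1 + 1) - h (x + 1) + 1 / (k + 1)|
        = |(h (x + 1) - h x + 1 / (k + 1)) + (-(2 * α / (k + 1))) * h (x + 1)| := by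
          rw [quasiEigenfunction]; ring_nf
      _ ≤ 4 * α * x / (k + 1) + 2 * α / (k + 1) * 2 := by
          refine (abs_add_le _ _).trans (add_le_add hd ?_)
          rw [abs_mul, abs_neg, abs_of_nonneg (by positivity)]
          exact mul_le_mul_of_nonneg_left hbound (by positivity)
      _ = 4 * α * (x + 1 : ℕ) / (k + 1) := by push_cast; ring

theorem one_sub_div_succ_mem_Icc (hα0 : 0 ≤ α) (hα1 : α ≤ 1) :
    1 - α / (k + 1) ∈ Set.Icc (0 : ℝ) 1 := by
  have hK : (1 : ℝ) ≤ k + 1 := by linarith [(k.cast_nonneg : (0 : ℝ) ≤ k)]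
  constructor
  · rw [sub_nonneg]; exact div_le_one_of_le₀ (hα1.trans hK) (by positivity)
  · linarith [div_nonneg hα0 (by positivity : (0 : ℝ) ≤ k + 1)]

theorem abs_one_sub_quasiEigenfunction_le (hα0 : 0 ≤ α) (hsmall : 2 * α * (k + 1) ≤ 1) {x : ℕ}
    (hx : x ≤ k + 1) : |1 - h x| ≤ 2 := by
  have hK : (0 : ℝ) < k + 1 := by positivity
  have hxK : (x : ℝ) ≤ k + 1 := by exact_mod_cast hx
  have hlin : |(x : ℝ) / (k + 1)| ≤ 1 := by
    rw [abs_of_nonneg (by positivity)]; exact div_le_one_of_le₀ hxK hK.le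
  have hquad : 2 * α * x ^ 2 / (k + 1) ≤ 1 := by
    rw [div_le_one hK]; nlinarith
  have hnear := (quasiEigenfunction_near_linear hα0 hsmall hx).1.trans hquad
  calc |1 - h x| = |(x : ℝ) / (k + 1) - (h x - (1 - x / (k + 1)))| := by ring_nf
    _ ≤ 1 + 1 := (abs_sub _ _).trans (add_le_add hlin hnear)
    _ = 2 := by norm_num

theorem abs_quasiEigenfunction_succ_le (hα0 : 0 ≤ α) (hsmall : 2 * α * (k + 1) ≤ 1) :
    |h (k + 1)| ≤ 2 * α * (k + 1) := by
  have hK : (k : ℝ) + 1 ≠ 0 := by positivity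
  have := (quasiEigenfunction_near_linear hα0 hsmall le_rfl).1
  push_cast at this
  rwa [div_self hK, sub_self, sub_zero, pow_two, ← mul_assoc, mul_div_assoc, div_self hK,
    mul_one] at this

theorem abs_killedMatrix_pow_mulVec_quasiEigenfunction_sub_le (hk : 1 ≤ k) (hα0 : 0 ≤ α)
    (hα1 : α ≤ 1) (hsmall : 2 * α * (k + 1) ≤ 1) (t : ℕ) :
    |(killedMatrix k α ^ t *ᵥ fun j => h j) 0 - (1 - α / (k + 1)) ^ t| ≤ 2 * α * (k + 1) := by
  have hQ := killedMatrix_nonneg (k := k) hα0 hα1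
  have hrate := one_sub_div_succ_mem_Icc (k := k) hα0 hα1
  have hr : |1 - α / ((k : ℝ) + 1)| ≤ 1 := abs_le.2 ⟨by linarith [hrate.1], hrate.2⟩
  have hdef (i : Fin (k + 1)) :
      |(killedMatrix k α *ᵥ fun j => h j) i - (1 - α / (k + 1)) * h i|
        ≤ 2 * α * (k + 1) * (1 - (killedMatrix k α *ᵥ 1) i) := by
    rw [killedMatrix_mulVec_quasiEigenfunction hk, killedMatrix_mulVec_one hk]
    split_ifs
    · rw [abs_div, abs_neg, abs_two]
      linarith [abs_quasiEigenfunction_succ_le hα0 hsmall]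
    · simp
  have hpow := Matrix.abs_pow_mulVec_sub_pow_mul_le hQ hr hdef t 0
  simp only [Fin.val_zero] at hpow
  rw [show h 0 = 1 from rfl, mul_one] at hpow
  refine hpow.trans (mul_le_of_le_one_right (by positivity) ?_)
  linarith [Matrix.pow_mulVec_one_nonneg hQ t 0]

theorem abs_killedMatrix_pow_mulVec_one_sub_quasiEigenfunction_le (hk : 1 ≤ k) (hα0 : 0 ≤ α)
    (hα1 : α ≤ 1) (hsmall : 2 * α * (k + 1) ≤ 1) (t : ℕ) :
    |(killedMatrix k α ^ t *ᵥ 1) 0 - (killedMatrix k α ^ t *ᵥ fun j => h j) 0| ≤ 4 * k * α := by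
  have hQ := Matrix.pow_apply_nonneg (killedMatrix_nonneg (k := k) hα0 hα1) t
  rw [← Pi.sub_apply, ← mulVec_sub]
  simp only [mulVec, dotProduct, Fin.sum_univ_succ, Pi.sub_apply, Pi.one_apply, Fin.val_zero]
  rw [show h 0 = 1 from rfl, sub_self, mul_zero, zero_add]
  calc |∑ j : Fin k, (killedMatrix k α ^ t) 0 j.succ * (1 - h (j.succ : ℕ))|
      ≤ ∑ j : Fin k, 2 * α * 2 := (Finset.abs_sum_le_sum_abs _ _).trans <|
        Finset.sum_le_sum fun j _ => by
          rw [abs_mul, abs_of_nonneg (hQ _ _)]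
          exact mul_le_mul (killedMatrix_pow_zero_apply_le hk hα0 hα1 t (Fin.succ_ne_zero j))
            (abs_one_sub_quasiEigenfunction_le hα0 hsmall (by omega)) (abs_nonneg _)
            (by positivity)
    _ = 4 * k * α := by simp; ring

theorem abs_killedMatrix_pow_mulVec_one_sub_pow_le (hα0 : 0 < α) (hα1 : α ≤ 1) (t : ℕ) :
    |(killedMatrix k α ^ t *ᵥ 1) 0 - (1 - α / (k + 1)) ^ t| ≤ 8 * k * α := by
  rcases Nat.eq_zero_or_pos k with rfl | hk
  · simp [killedMatrix_zero_pow_mulVec_one]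
  have hQ := killedMatrix_nonneg (k := k) hα0.le hα1
  have hk' : (1 : ℝ) ≤ k := by exact_mod_cast hk
  by_cases hsmall : 2 * α * (k + 1) ≤ 1
  · calc |(killedMatrix k α ^ t *ᵥ 1) 0 - (1 - α / (k + 1)) ^ t|
        ≤ |(killedMatrix k α ^ t *ᵥ 1) 0 - (killedMatrix k α ^ t *ᵥ fun j => h j) 0|
          + |(killedMatrix k α ^ t *ᵥ fun j => h j) 0 - (1 - α / (k + 1)) ^ t| :=
          abs_sub_le _ _ _
      _ ≤ 4 * k * α + 2 * α * (k + 1) :=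
          add_le_add
            (abs_killedMatrix_pow_mulVec_one_sub_quasiEigenfunction_le hk hα0.le hα1 hsmall t)
            (abs_killedMatrix_pow_mulVec_quasiEigenfunction_sub_le hk hα0.le hα1 hsmall t)
      _ ≤ 8 * k * α := by nlinarith
  · have hF0 := pow_mulVec_one_nonneg hQ t 0
    have hF1 : (killedMatrix k α ^ t *ᵥ 1) 0 ≤ 1 :=
      pow_mulVec_one_le_one hQ (killedMatrix_mulVec_one_le hk) t 0
    obtain ⟨hr0, hr1⟩ := one_sub_div_succ_mem_Icc (k := k) hα0.le hα1
    have hp0 := pow_nonneg hr0 t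
    have hp1 := pow_le_one₀ hr0 hr1 (n := t)
    rw [abs_le]
    constructor <;> nlinarith

end QuasiEigenfunction

theorem bdStay_eq_killedMatrix_pow_mulVec_one {L k : ℕ} {α : ℝ} (hkL : k < L) (t : ℕ)
    (x : Fin (k + 1)) :
    bdStay L α t x (fun _ => {i | i ≤ k}) = (killedMatrix k α ^ t *ᵥ 1) x := by
  induction t generalizing x with
  | zero =>
    simpa using bdStay_zero_of_mem (α := α) (by omega) (show (x : ℕ) ∈ {i | i ≤ k} from x.is_le)
  | succ t ih =>
    rw [bdStay_succ (by omega) (show (x : ℕ) ∈ {i | i ≤ k} from x.is_le), pow_succ',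
      ← mulVec_mulVec, ← Finset.sum_subset (Finset.range_subset_range.2 (by omega : k + 1 ≤ L + 1))]
    · rw [← Fin.sum_univ_eq_sum_range (fun y => bdKernel L α x y * bdStay L α t y _)]
      refine Finset.sum_congr rfl fun y _ => ?_
      rw [ih y, bdKernel_eq_halfLineKernel (by omega)]
      rfl
    · intro y _ hy
      rw [bdStay_eq_zero_of_notMem (by simpa using hy), mul_zero]

theorem bdStay_asymptotics :
    ∃ c : ℝ, 0 < c ∧ ∀ L : ℕ, 1 ≤ L → ∀ α : ℝ, α ∈ Set.Ioc (0 : ℝ) 1 →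
      ∀ k : ℕ, k ≤ L - 1 → ∀ t : ℕ,
        bdStay L α t 0 (fun _ => {i : ℕ | i ≤ k})
          = bdStay L α t L (fun _ => {i : ℕ | L - k ≤ i}) ∧
        |bdStay L α t 0 (fun _ => {i : ℕ | i ≤ k}) - (1 - α / (k + 1)) ^ t| ≤ c * k * α := by
  refine ⟨8, by norm_num, fun L hL α ⟨hα0, hα1⟩ k hk t => ⟨?_, ?_⟩⟩
  · rw [← bdStay_reflect le_rfl, Nat.sub_self]
    congr
    ext i
    simp only [Set.mem_ofPred_eq]
    omega
  · have hstay := bdStay_eq_killedMatrix_pow_mulVec_one (α := α) (by omega : k < L) t 0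
    rw [Fin.val_zero] at hstay
    rw [hstay]
    exact abs_killedMatrix_pow_mulVec_one_sub_pow_le hα0 hα1 t
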